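/- arXiv:2008.11158 — 2 statements merged into one kernel-verified Lean document; each statement's English description precedes it below -/
import Mathlib

section
/- Let (B_1, α_1) and (B_2, α_2) be diagonalizable evolution algebras, β: B_1 → B_2 an algebra isomorphism, and φ: B_1 → K a linear form satisfying φ(xy) = α_2(β(x), β(y)) − α_1(x, y) for all x, y ∈ B_1. Then F: Ad(B_1, α_1) → Ad(B_2, α_2) defined by F(λ, x) = (λ + φ(x), β(x)) is an algebra isomorphism. -/
namespace EvolutionAlgebra

variable {K A B : Type*} [Field K] [AddCommGroup A] [Module K A] [AddCommGroup B] [Module K B]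

/-- The multiplication of `Ad(B, α) = K × B`: `(λ, x)(λ', x') = (α x x', x x')`. -/
def adMul (mulB : B →ₗ[K] B →ₗ[K] B) (α : B →ₗ[K] B →ₗ[K] K) :
    (K × B) →ₗ[K] (K × B) →ₗ[K] (K × B) :=
  LinearMap.mk₂ K (fun p q => (α p.2 q.2, mulB p.2 q.2))
    (fun p p' q => by simp)
    (fun c p q => by simp)
    (fun p q q' => by simp)
    (fun c p q => by simp)

/-- The map `F(λ, x) = (λ + φ x, β x)` between adjunction algebras. -/
def adjF {B₁ B₂ : Type*} [AddCommGroup B₁] [Module K B₁] [AddCommGroup B₂] [Module K B₂]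
    (φ : B₁ →ₗ[K] K) (β : B₁ ≃ₗ[K] B₂) : K × B₁ → K × B₂ :=
  fun p => (p.1 + φ p.2, β p.2)

section

variable {B₁ B₂ : Type*} [AddCommGroup B₁] [Module K B₁] [AddCommGroup B₂] [Module K B₂]

-- `(λ, x) ↦ (x, λ) ↦ (β x, λ + φ x) ↦ (λ + φ x, β x)`
def adjFLinearEquiv (φ : B₁ →ₗ[K] K) (β : B₁ ≃ₗ[K] B₂) : (K × B₁) ≃ₗ[K] (K × B₂) :=
  ((LinearEquiv.prodComm K K B₁).trans (β.skewProd (LinearEquiv.refl K K) φ)).trans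
    (LinearEquiv.prodComm K B₂ K)

theorem coe_adjFLinearEquiv (φ : B₁ →ₗ[K] K) (β : B₁ ≃ₗ[K] B₂) :
    ⇑(adjFLinearEquiv φ β) = adjF φ β :=
  rfl

theorem isLinearMap_adjF (φ : B₁ →ₗ[K] K) (β : B₁ ≃ₗ[K] B₂) : IsLinearMap K (adjF φ β) :=
  coe_adjFLinearEquiv φ β ▸ (adjFLinearEquiv φ β).toLinearMap.isLinear

theorem bijective_adjF (φ : B₁ →ₗ[K] K) (β : B₁ ≃ₗ[K] B₂) : Function.Bijective (adjF φ β) :=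
  coe_adjFLinearEquiv φ β ▸ (adjFLinearEquiv φ β).bijective

/-- The scalar component of `F(pq)` is `α₁(x, y) + φ(xy)`, which the cocycle condition on `φ`
turns into `α₂(βx, βy)`. -/
theorem adjF_adMul (mul₁ : B₁ →ₗ[K] B₁ →ₗ[K] B₁) (mul₂ : B₂ →ₗ[K] B₂ →ₗ[K] B₂)
    (α₁ : B₁ →ₗ[K] B₁ →ₗ[K] K) (α₂ : B₂ →ₗ[K] B₂ →ₗ[K] K) (β : B₁ ≃ₗ[K] B₂)
    (hβ : ∀ x y : B₁, β (mul₁ x y) = mul₂ (β x) (β y))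
    (φ : B₁ →ₗ[K] K) (hφ : ∀ x y : B₁, φ (mul₁ x y) = α₂ (β x) (β y) - α₁ x y)
    (p q : K × B₁) :
    adjF φ β (adMul mul₁ α₁ p q) = adMul mul₂ α₂ (adjF φ β p) (adjF φ β q) := by
  simp [adjF, adMul, hφ, hβ]

end

theorem stmt9_general
    {B₁ B₂ : Type*} [AddCommGroup B₁] [Module K B₁] [AddCommGroup B₂] [Module K B₂]
    (mul₁ : B₁ →ₗ[K] B₁ →ₗ[K] B₁)
    (mul₂ : B₂ →ₗ[K] B₂ →ₗ[K] B₂)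
    (α₁ : B₁ →ₗ[K] B₁ →ₗ[K] K)
    (α₂ : B₂ →ₗ[K] B₂ →ₗ[K] K)
    (β : B₁ ≃ₗ[K] B₂) (hβ : ∀ x y : B₁, β (mul₁ x y) = mul₂ (β x) (β y))
    (φ : B₁ →ₗ[K] K) (hφ : ∀ x y : B₁, φ (mul₁ x y) = α₂ (β x) (β y) - α₁ x y) :
    IsLinearMap K (adjF φ β) ∧ Function.Bijective (adjF φ β) ∧
      ∀ p q : K × B₁,
        adjF φ β (adMul mul₁ α₁ p q) = adMul mul₂ α₂ (adjF φ β p) (adjF φ β q) :=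
  ⟨isLinearMap_adjF φ β, bijective_adjF φ β, adjF_adMul mul₁ mul₂ α₁ α₂ β hβ φ hφ⟩

theorem stmt9 {ι₁ ι₂ : Type*} [Fintype ι₁] [Fintype ι₂]
    {B₁ B₂ : Type*} [AddCommGroup B₁] [Module K B₁] [AddCommGroup B₂] [Module K B₂]
    (mul₁ : B₁ →ₗ[K] B₁ →ₗ[K] B₁) (hcomm₁ : ∀ x y : B₁, mul₁ x y = mul₁ y x)
    (mul₂ : B₂ →ₗ[K] B₂ →ₗ[K] B₂) (hcomm₂ : ∀ x y : B₂, mul₂ x y = mul₂ y x)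
    (α₁ : B₁ →ₗ[K] B₁ →ₗ[K] K) (hsym₁ : ∀ x y : B₁, α₁ x y = α₁ y x)
    (α₂ : B₂ →ₗ[K] B₂ →ₗ[K] K) (hsym₂ : ∀ x y : B₂, α₂ x y = α₂ y x)
    (b₁ : Module.Basis ι₁ K B₁) (hnat₁ : ∀ i j, i ≠ j → mul₁ (b₁ i) (b₁ j) = 0)
    (hdiag₁ : ∀ i j, i ≠ j → α₁ (b₁ i) (b₁ j) = 0)
    (b₂ : Module.Basis ι₂ K B₂) (hnat₂ : ∀ i j, i ≠ j → mul₂ (b₂ i) (b₂ j) = 0)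
    (hdiag₂ : ∀ i j, i ≠ j → α₂ (b₂ i) (b₂ j) = 0)
    (β : B₁ ≃ₗ[K] B₂) (hβ : ∀ x y : B₁, β (mul₁ x y) = mul₂ (β x) (β y))
    (φ : B₁ →ₗ[K] K) (hφ : ∀ x y : B₁, φ (mul₁ x y) = α₂ (β x) (β y) - α₁ x y) :
    IsLinearMap K (adjF φ β) ∧ Function.Bijective (adjF φ β) ∧
      ∀ p q : K × B₁,
        adjF φ β (adMul mul₁ α₁ p q) = adMul mul₂ α₂ (adjF φ β p) (adjF φ β q) :=
  stmt9_general mul₁ mul₂ α₁ α₂ β hβ φ hφ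

end EvolutionAlgebra
end

section
/- Let B_1 and B_2 be perfect diagonalizable evolution algebras (B_i² = B_i). Then Ad(B_1, α_1) ≅ Ad(B_2, α_2) if and only if B_1 ≅ B_2 as algebras. -/
/-!
Perfection makes the squares `e i * e i` of a natural basis a basis of `B`, and the coefficients
of `x * y` in that basis are `x_i y_i`. Consequently every bilinear form that is diagonal in the
natural basis factors as `φ (x * y)` for a linear form `φ`, and `B` has zero annihilator.

If `F : Ad(B₁, α₁) ≃ Ad(B₂, α₂)`, the line `K × 0` is the annihilator of `Ad`, so `F` preserves
it and induces an isomorphism `B₁ ≃ B₂` between the quotients by it. Conversely, given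
`g : B₁ ≃ B₂`, the form `α₂ (g x) (g y) - α₁ x y` is diagonal, hence equals `φ (x * y)`, and
`(λ, x) ↦ (λ + φ x, g x)` is an isomorphism of the `Ad` algebras.
-/

namespace EvolutionAlgebra

variable {K A B : Type*} [Field K] [AddCommGroup A] [Module K A] [AddCommGroup B] [Module K B]

/-- `b` is a natural basis of the evolution algebra `(B, mul)` iff `IsDiagonal mul b`. -/
def IsDiagonal {ι M : Type*} [AddCommGroup M] [Module K M] (f : B →ₗ[K] B →ₗ[K] M)
    (b : Module.Basis ι K B) : Prop :=
  ∀ i j, i ≠ j → f (b i) (b j) = 0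

def IsPerfect (mul : B →ₗ[K] B →ₗ[K] B) : Prop :=
  Submodule.span K {z : B | ∃ x y : B, z = mul x y} = ⊤

section Bilinear

variable {ι M : Type*} [Fintype ι] [AddCommGroup M] [Module K M]

theorem bilin_eq_sum_of_isDiagonal {f : B →ₗ[K] B →ₗ[K] M} {b : Module.Basis ι K B}
    (hdiag : IsDiagonal f b) (x y : B) :
    f x y = ∑ i, (b.repr x i * b.repr y i) • f (b i) (b i) := by
  classical
  conv_lhs => rw [← b.sum_repr x, ← b.sum_repr y]
  simp only [map_sum, map_smul, LinearMap.sum_apply, LinearMap.smul_apply]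
  refine Finset.sum_congr rfl fun i _ => ?_
  rw [Finset.sum_eq_single i (fun j _ hji => by simp [hdiag j i hji])
    (fun h => absurd (Finset.mem_univ i) h), smul_smul, mul_comm]

end Bilinear

section Perfect

variable {ι : Type*} [Fintype ι] {mul : B →ₗ[K] B →ₗ[K] B} {b : Module.Basis ι K B}

theorem top_le_span_mul_self (hnat : IsDiagonal mul b) (hperf : IsPerfect mul) :
    ⊤ ≤ Submodule.span K (Set.range fun i => mul (b i) (b i)) := by
  rw [← hperf, Submodule.span_le]
  rintro _ ⟨x, y, rfl⟩
  rw [bilin_eq_sum_of_isDiagonal hnat x y]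
  exact Submodule.sum_mem _ fun i _ => Submodule.smul_mem _ _ (Submodule.subset_span ⟨i, rfl⟩)

noncomputable def basisMulSelf (hnat : IsDiagonal mul b) (hperf : IsPerfect mul) :
    Module.Basis ι K B :=
  haveI : Module.Finite K B := Module.Finite.of_basis b
  basisOfTopLeSpanOfCardEqFinrank _ (top_le_span_mul_self hnat hperf)
    (Module.finrank_eq_card_basis b).symm

theorem basisMulSelf_repr_mul (hnat : IsDiagonal mul b) (hperf : IsPerfect mul)
    (x y : B) (i : ι) : (basisMulSelf hnat hperf).repr (mul x y) i = b.repr x i * b.repr y i := by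
  have hsum : mul x y = ∑ i, (b.repr x i * b.repr y i) • basisMulSelf hnat hperf i := by
    simpa [basisMulSelf] using bilin_eq_sum_of_isDiagonal hnat x y
  rw [hsum, Module.Basis.repr_sum_self]

theorem exists_comp_mul_eq_of_isDiagonal (hnat : IsDiagonal mul b) (hperf : IsPerfect mul)
    {M : Type*} [AddCommGroup M] [Module K M] {β : B →ₗ[K] B →ₗ[K] M} (hβ : IsDiagonal β b) :
    ∃ φ : B →ₗ[K] M, ∀ x y, φ (mul x y) = β x y := by
  refine ⟨(basisMulSelf hnat hperf).constr K fun i => β (b i) (b i), fun x y => ?_⟩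
  simp only [Module.Basis.constr_apply_fintype, Module.Basis.equivFun_apply,
    basisMulSelf_repr_mul]
  exact (bilin_eq_sum_of_isDiagonal hβ x y).symm

theorem eq_zero_of_mul_eq_zero_of_isDiagonal (hnat : IsDiagonal mul b) (hperf : IsPerfect mul)
    {M : Type*} [AddCommGroup M] [Module K M] {β : B →ₗ[K] B →ₗ[K] M} (hβ : IsDiagonal β b)
    {x y : B} (h : mul x y = 0) : β x y = 0 := by
  obtain ⟨φ, hφ⟩ := exists_comp_mul_eq_of_isDiagonal hnat hperf hβ
  rw [← hφ, h, map_zero]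

theorem eq_zero_of_forall_mul_eq_zero (hnat : IsDiagonal mul b) (hperf : IsPerfect mul) {x : B}
    (h : ∀ y, mul x y = 0) : x = 0 := by
  refine b.repr.injective (Finsupp.ext fun j => ?_)
  have := basisMulSelf_repr_mul hnat hperf x (b j) j
  simpa [h] using this.symm

end Perfect

section Prod

variable {R P M N : Type*} [CommSemiring R] [AddCommMonoid P] [AddCommMonoid M] [AddCommMonoid N]
  [Module R P] [Module R M] [Module R N]

theorem _root_.LinearEquiv.symm_map_bilin (F : M ≃ₗ[R] N) {f : M →ₗ[R] M →ₗ[R] M}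
    {g : N →ₗ[R] N →ₗ[R] N} (hF : ∀ p q, F (f p q) = g (F p) (F q)) (p q : N) :
    F.symm (g p q) = f (F.symm p) (F.symm q) := by
  rw [F.symm_apply_eq, hF, F.apply_symm_apply, F.apply_symm_apply]

theorem snd_map_eq_snd_map_inr (F : (P × M) →ₗ[R] (P × N)) (hF : ∀ a, (F (a, 0)).2 = 0)
    (p : P × M) : (F p).2 = (F (0, p.2)).2 := by
  conv_lhs => rw [show p = (p.1, 0) + (0, p.2) by simp]
  rw [map_add, Prod.snd_add, hF, zero_add]

def sndEquiv (F : (P × M) ≃ₗ[R] (P × N)) (hF : ∀ a, (F (a, 0)).2 = 0)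
    (hF' : ∀ a, (F.symm (a, 0)).2 = 0) : M ≃ₗ[R] N :=
  LinearEquiv.ofLinearMap (LinearMap.snd R P N ∘ₗ F.toLinearMap ∘ₗ LinearMap.inr R P M)
    (LinearMap.snd R P M ∘ₗ F.symm.toLinearMap ∘ₗ LinearMap.inr R P N)
    (LinearMap.ext fun y => by
      change (F (0, (F.symm (0, y)).2)).2 = y
      simpa using (snd_map_eq_snd_map_inr F.toLinearMap hF (F.symm (0, y))).symm)
    (LinearMap.ext fun x => by
      change (F.symm (0, (F (0, x)).2)).2 = x
      simpa using (snd_map_eq_snd_map_inr F.symm.toLinearMap hF' (F (0, x))).symm)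

theorem sndEquiv_apply (F : (P × M) ≃ₗ[R] (P × N)) (hF : ∀ a, (F (a, 0)).2 = 0)
    (hF' : ∀ a, (F.symm (a, 0)).2 = 0) (x : M) : sndEquiv F hF hF' x = (F (0, x)).2 :=
  rfl

end Prod

section Ad

variable {B₁ B₂ : Type*} [AddCommGroup B₁] [Module K B₁] [AddCommGroup B₂] [Module K B₂]
  {mul₁ : B₁ →ₗ[K] B₁ →ₗ[K] B₁} {mul₂ : B₂ →ₗ[K] B₂ →ₗ[K] B₂}
  {α₁ : B₁ →ₗ[K] B₁ →ₗ[K] K} {α₂ : B₂ →ₗ[K] B₂ →ₗ[K] K}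

theorem snd_map_inl_eq_zero (F : (K × B₁) ≃ₗ[K] (K × B₂))
    (hF : ∀ p q, F (adMul mul₁ α₁ p q) = adMul mul₂ α₂ (F p) (F q))
    (hann : ∀ x, (∀ y, mul₂ x y = 0) → x = 0) (μ : K) : (F (μ, 0)).2 = 0 := by
  refine hann _ fun y => ?_
  have h := hF (μ, 0) (F.symm (0, y))
  rw [F.apply_symm_apply, show adMul mul₁ α₁ (μ, 0) (F.symm (0, y)) = 0 by simp [adMul],
    map_zero] at h
  simpa [adMul] using (congrArg Prod.snd h).symm

theorem exists_mulEquiv_of_adEquiv (F : (K × B₁) ≃ₗ[K] (K × B₂))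
    (hF : ∀ p q, F (adMul mul₁ α₁ p q) = adMul mul₂ α₂ (F p) (F q))
    (hann₁ : ∀ x, (∀ y, mul₁ x y = 0) → x = 0) (hann₂ : ∀ x, (∀ y, mul₂ x y = 0) → x = 0) :
    ∃ g : B₁ ≃ₗ[K] B₂, ∀ x y, g (mul₁ x y) = mul₂ (g x) (g y) := by
  have hinl := snd_map_inl_eq_zero F hF hann₂
  refine ⟨sndEquiv F hinl (snd_map_inl_eq_zero F.symm (F.symm_map_bilin hF) hann₁),
    fun x y => ?_⟩
  simp only [sndEquiv_apply]
  calc (F (0, mul₁ x y)).2 = (F (adMul mul₁ α₁ (0, x) (0, y))).2 :=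
        (snd_map_eq_snd_map_inr F.toLinearMap hinl (adMul mul₁ α₁ (0, x) (0, y))).symm
    _ = mul₂ (F (0, x)).2 (F (0, y)).2 := by rw [hF]; rfl

theorem exists_adEquiv_of_mulEquiv (g : B₁ ≃ₗ[K] B₂)
    (hg : ∀ x y, g (mul₁ x y) = mul₂ (g x) (g y))
    (φ : B₁ →ₗ[K] K) (hφ : ∀ x y, φ (mul₁ x y) = α₂ (g x) (g y) - α₁ x y) :
    ∃ F : (K × B₁) ≃ₗ[K] (K × B₂),
      ∀ p q, F (adMul mul₁ α₁ p q) = adMul mul₂ α₂ (F p) (F q) := by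
  refine ⟨(LinearEquiv.prodComm K K B₁).trans
    ((g.skewProd (LinearEquiv.refl K K) φ).trans (LinearEquiv.prodComm K B₂ K)), fun p q => ?_⟩
  simp [adMul, hφ, hg]

end Ad

theorem stmt11_general {ι₁ ι₂ : Type*} [Fintype ι₁] [Fintype ι₂]
    {B₁ B₂ : Type*} [AddCommGroup B₁] [Module K B₁] [AddCommGroup B₂] [Module K B₂]
    (mul₁ : B₁ →ₗ[K] B₁ →ₗ[K] B₁) (mul₂ : B₂ →ₗ[K] B₂ →ₗ[K] B₂)
    (α₁ : B₁ →ₗ[K] B₁ →ₗ[K] K) (α₂ : B₂ →ₗ[K] B₂ →ₗ[K] K)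
    (b₁ : Module.Basis ι₁ K B₁) (hnat₁ : ∀ i j, i ≠ j → mul₁ (b₁ i) (b₁ j) = 0)
    (hdiag₁ : ∀ i j, i ≠ j → α₁ (b₁ i) (b₁ j) = 0)
    (b₂ : Module.Basis ι₂ K B₂) (hnat₂ : ∀ i j, i ≠ j → mul₂ (b₂ i) (b₂ j) = 0)
    (hdiag₂ : ∀ i j, i ≠ j → α₂ (b₂ i) (b₂ j) = 0)
    (hperf₁ : Submodule.span K {z : B₁ | ∃ x y : B₁, z = mul₁ x y} = ⊤)
    (hperf₂ : Submodule.span K {z : B₂ | ∃ x y : B₂, z = mul₂ x y} = ⊤) :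
    (∃ F : (K × B₁) ≃ₗ[K] (K × B₂),
        ∀ p q : K × B₁, F (adMul mul₁ α₁ p q) = adMul mul₂ α₂ (F p) (F q)) ↔
      (∃ g : B₁ ≃ₗ[K] B₂, ∀ x y : B₁, g (mul₁ x y) = mul₂ (g x) (g y)) := by
  constructor
  · rintro ⟨F, hF⟩
    exact exists_mulEquiv_of_adEquiv F hF (fun _ => eq_zero_of_forall_mul_eq_zero hnat₁ hperf₁)
      (fun _ => eq_zero_of_forall_mul_eq_zero hnat₂ hperf₂)
  · rintro ⟨g, hg⟩
    have hβ : IsDiagonal (α₂.compl₁₂ g.toLinearMap g.toLinearMap - α₁) b₁ := fun i j hij => by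
      have hα₂ : α₂ (g (b₁ i)) (g (b₁ j)) = 0 :=
        eq_zero_of_mul_eq_zero_of_isDiagonal hnat₂ hperf₂ hdiag₂
          (by rw [← hg, hnat₁ i j hij, map_zero])
      simp [hα₂, hdiag₁ i j hij]
    obtain ⟨φ, hφ⟩ := exists_comp_mul_eq_of_isDiagonal hnat₁ hperf₁ hβ
    exact exists_adEquiv_of_mulEquiv g hg φ fun x y => by simp [hφ]

theorem stmt11 {ι₁ ι₂ : Type*} [Fintype ι₁] [Fintype ι₂]
    {B₁ B₂ : Type*} [AddCommGroup B₁] [Module K B₁] [AddCommGroup B₂] [Module K B₂]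
    (mul₁ : B₁ →ₗ[K] B₁ →ₗ[K] B₁) (hcomm₁ : ∀ x y : B₁, mul₁ x y = mul₁ y x)
    (mul₂ : B₂ →ₗ[K] B₂ →ₗ[K] B₂) (hcomm₂ : ∀ x y : B₂, mul₂ x y = mul₂ y x)
    (α₁ : B₁ →ₗ[K] B₁ →ₗ[K] K) (hsym₁ : ∀ x y : B₁, α₁ x y = α₁ y x)
    (α₂ : B₂ →ₗ[K] B₂ →ₗ[K] K) (hsym₂ : ∀ x y : B₂, α₂ x y = α₂ y x)
    (b₁ : Module.Basis ι₁ K B₁) (hnat₁ : ∀ i j, i ≠ j → mul₁ (b₁ i) (b₁ j) = 0)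
    (hdiag₁ : ∀ i j, i ≠ j → α₁ (b₁ i) (b₁ j) = 0)
    (b₂ : Module.Basis ι₂ K B₂) (hnat₂ : ∀ i j, i ≠ j → mul₂ (b₂ i) (b₂ j) = 0)
    (hdiag₂ : ∀ i j, i ≠ j → α₂ (b₂ i) (b₂ j) = 0)
    (hperf₁ : Submodule.span K {z : B₁ | ∃ x y : B₁, z = mul₁ x y} = ⊤)
    (hperf₂ : Submodule.span K {z : B₂ | ∃ x y : B₂, z = mul₂ x y} = ⊤) :
    (∃ F : (K × B₁) ≃ₗ[K] (K × B₂),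
        ∀ p q : K × B₁, F (adMul mul₁ α₁ p q) = adMul mul₂ α₂ (F p) (F q)) ↔
      (∃ g : B₁ ≃ₗ[K] B₂, ∀ x y : B₁, g (mul₁ x y) = mul₂ (g x) (g y)) :=
  stmt11_general mul₁ mul₂ α₁ α₂ b₁ hnat₁ hdiag₁ b₂ hnat₂ hdiag₂ hperf₁ hperf₂
end EvolutionAlgebra
end
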